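/- Suppose loss : ℝ → ℝ is convex and Lipschitz with argmin loss = {0}, δ > 1, and P(Z ≠ 0) > 0. If (α_*, κ_*) ∈ (0,∞)² is a solution to the nonlinear system, then v_* := prox[κ_*·loss](α_* G + Z) − Z belongs to H, satisfies ‖v_*‖ = α_*·√(1−δ⁻¹) > 0, solves the constrained problem min_{v∈H : Gcal(v) ≤ 0} Lcal(v), and the KKT condition holds at v_* with Lagrange multiplier μ_* = α_*·√(1−δ⁻¹)/κ_* > 0. -/

import Mathlib

open MeasureTheory ProbabilityTheory Real Set Filter

noncomputable section

/-- Subdifferential of a function `f : ℝ → ℝ` at `x`. -/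
def subderiv (f : ℝ → ℝ) (x : ℝ) : Set ℝ :=
  {g : ℝ | ∀ y : ℝ, f x + g * (y - x) ≤ f y}

/-- Moreau envelope `env_f(x; τ)`. -/
def moreau (f : ℝ → ℝ) (τ x : ℝ) : ℝ :=
  ⨅ u : ℝ, ((x - u) ^ 2 / (2 * τ) + f u)

/-- Proximal operator `prox[τ·f](x)`, the minimizer of `u ↦ τ f(u) + (x-u)²/2`. -/
def prox (τ : ℝ) (f : ℝ → ℝ) (x : ℝ) : ℝ :=
  Classical.epsilon fun u : ℝ =>
    ∀ y : ℝ, τ * f u + (x - u) ^ 2 / 2 ≤ τ * f y + (x - y) ^ 2 / 2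

/-- Joint law of `(G, W)` where `G ~ N(0,1)` is independent of `W ~ ζ`. -/
def nu (ζ : Measure ℝ) : Measure (ℝ × ℝ) :=
  (gaussianReal 0 1).prod ζ

/-- The set of global minimizers of `f` is `{0}`. -/
def argminIsZero (f : ℝ → ℝ) : Prop :=
  {x : ℝ | ∀ y : ℝ, f x ≤ f y} = {0}

/-- `f` is Lipschitz. -/
def LipschitzFun (f : ℝ → ℝ) : Prop := ∃ K : NNReal, LipschitzWith K f

/-- `L(c, τ) = E[env_loss(c·G + Z; τ) − loss(Z)]`. -/
def Lfun (ζ : Measure ℝ) (loss : ℝ → ℝ) (c τ : ℝ) : ℝ :=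
  ∫ p : ℝ × ℝ, (moreau loss τ (c * p.1 + p.2) - loss p.2) ∂(nu ζ)

/-- Unregularized potential `M(α)`. -/
def Mpot (ζ : Measure ℝ) (loss : ℝ → ℝ) (δ α : ℝ) : ℝ :=
  ⨆ β : Ioi (0:ℝ), ⨅ τg : Ioi (0:ℝ),
    ((β : ℝ) * (τg : ℝ) / (2 * δ) + Lfun ζ loss α ((τg : ℝ) / (β : ℝ)) - α * (β : ℝ) / δ)

/-- Membership in the Hilbert space `H` of square integrable functions of `(G, Z)`. -/
def inH (ζ : Measure ℝ) (v : ℝ × ℝ → ℝ) : Prop :=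
  MemLp v 2 (nu ζ)

/-- Hilbert norm `‖v‖ = E[v²]^{1/2}`. -/
def hnorm (ζ : Measure ℝ) (v : ℝ × ℝ → ℝ) : ℝ :=
  Real.sqrt (∫ p : ℝ × ℝ, (v p) ^ 2 ∂(nu ζ))

/-- `Lcal(v) = E[loss(v + Z) − loss(Z)]`. -/
def Lcal (ζ : Measure ℝ) (loss : ℝ → ℝ) (v : ℝ × ℝ → ℝ) : ℝ :=
  ∫ p : ℝ × ℝ, (loss (v p + p.2) - loss p.2) ∂(nu ζ)

/-- `Gcal(v) = ‖v‖ − E[v·G]/√(1 − δ⁻¹)`. -/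
def Gcal (ζ : Measure ℝ) (δ : ℝ) (v : ℝ × ℝ → ℝ) : ℝ :=
  hnorm ζ v - (∫ p : ℝ × ℝ, v p * p.1 ∂(nu ζ)) / Real.sqrt (1 - δ⁻¹)

/-- `v` solves `min_{v ∈ H, Gcal(v) ≤ 0} Lcal(v)`. -/
def SolvesConstrained (ζ : Measure ℝ) (loss : ℝ → ℝ) (δ : ℝ) (v : ℝ × ℝ → ℝ) : Prop :=
  inH ζ v ∧ Gcal ζ δ v ≤ 0 ∧
    ∀ u : ℝ × ℝ → ℝ, inH ζ u → Gcal ζ δ u ≤ 0 → Lcal ζ loss v ≤ Lcal ζ loss u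

/-- Subdifferential of a functional `F : H → ℝ` at `v`, as a subset of `H`. -/
def subdiffH (ζ : Measure ℝ) (F : (ℝ × ℝ → ℝ) → ℝ) (v : ℝ × ℝ → ℝ) : Set (ℝ × ℝ → ℝ) :=
  {g | inH ζ g ∧ ∀ u : ℝ × ℝ → ℝ, inH ζ u →
    F v + ∫ p : ℝ × ℝ, g p * (u p - v p) ∂(nu ζ) ≤ F u}

/-- KKT condition at `v` with multiplier `μ`:
`(−μ)·∂Gcal(v) ∩ ∂Lcal(v) ≠ ∅`, `μ·Gcal(v) = 0`, `Gcal(v) ≤ 0`. -/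
def KKT (ζ : Measure ℝ) (loss : ℝ → ℝ) (δ μ : ℝ) (v : ℝ × ℝ → ℝ) : Prop :=
  (∃ h ∈ subdiffH ζ (Gcal ζ δ) v, (fun p => -μ * h p) ∈ subdiffH ζ (Lcal ζ loss) v) ∧
    μ * Gcal ζ δ v = 0 ∧ Gcal ζ δ v ≤ 0

/-- The two-equation nonlinear system with unknowns `(α, κ)`. -/
def solvesSystem (ζ : Measure ℝ) (loss : ℝ → ℝ) (δ α κ : ℝ) : Prop :=
  α ^ 2 = δ * ∫ p : ℝ × ℝ,
      ((α * p.1 + p.2) - prox κ loss (α * p.1 + p.2)) ^ 2 ∂(nu ζ) ∧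
  α = δ * ∫ p : ℝ × ℝ,
      ((α * p.1 + p.2) - prox κ loss (α * p.1 + p.2)) * p.1 ∂(nu ζ)

/-- Threshold `δ_perfect = 1/(1 − inf_{t>0} E[dist(G, t·∂loss(Z))²])₊ ∈ (0, ∞]`. -/
def deltaPerfect (ζ : Measure ℝ) (loss : ℝ → ℝ) : ENNReal :=
  1 / ENNReal.ofReal
    (1 - ⨅ t : Ioi (0:ℝ),
      ∫ p : ℝ × ℝ, (Metric.infDist p.1 ((fun g => (t : ℝ) * g) '' subderiv loss p.2)) ^ 2 ∂(nu ζ))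

/-!
The residual `e = (αG + Z) − prox[κ·loss](αG + Z)` lies in `κ·∂loss(prox)`, hence is bounded, and
the two equations of the system say `E[e²] = α²/δ` and `E[eG] = α/δ`. Since `v_* = αG − e` and
`E[G²] = 1`, this gives `‖v_*‖ = αs` and `E[v_* G] = αs²` with `s = √(1 − δ⁻¹)`, so `Gcal(v_*) = 0`.
The subgradient `v_*/‖v_*‖ − G/s` of `Gcal` at `v_*`, multiplied by `−αs/κ`, is `e/κ`, which is
pointwise a subgradient of `loss` at `v_* + Z` and therefore a subgradient of `Lcal` at `v_*`:
this is the KKT condition, and KKT with a nonnegative multiplier gives optimality.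
-/

section Prox

open scoped Topology

variable {f : ℝ → ℝ} {K : NNReal} {τ : ℝ}

theorem prox_le (hf : LipschitzWith K f) (hτ : 0 < τ) (x y : ℝ) :
    τ * f (prox τ f x) + (x - prox τ f x) ^ 2 / 2 ≤ τ * f y + (x - y) ^ 2 / 2 := by
  refine Classical.epsilon_spec
    (p := fun u => ∀ y, τ * f u + (x - u) ^ 2 / 2 ≤ τ * f y + (x - y) ^ 2 / 2) ?_ y
  refine (hf.continuous.const_mul τ).add (by fun_prop) |>.exists_forall_le' x ?_
  -- Off the ball of radius `2τK` around `x`, the quadratic term beats the Lipschitz decrease.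
  refine Metric.mem_cocompact_of_closedBall_compl_subset x ⟨2 * τ * K, fun u hu => ?_⟩
  have hu : 2 * τ * K < |u - x| := by simpa [Real.dist_eq] using hu
  have hlip : f x - f u ≤ K * |u - x| := by
    have := hf.dist_le_mul u x
    rw [Real.dist_eq, Real.dist_eq] at this
    linarith [neg_abs_le (f u - f x)]
  show τ * f x + (x - x) ^ 2 / 2 ≤ τ * f u + (x - u) ^ 2 / 2
  nlinarith [mul_le_mul_of_nonneg_left hlip hτ.le, sq_abs (u - x), abs_nonneg (u - x)]

theorem sub_div_mem_subderiv_of_forall_le (hf : ConvexOn ℝ univ f) (hτ : 0 < τ) {x p : ℝ}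
    (hp : ∀ y, τ * f p + (x - p) ^ 2 / 2 ≤ τ * f y + (x - y) ^ 2 / 2) :
    (x - p) / τ ∈ subderiv f p := by
  intro y
  have hsegment : ∀ t ∈ Ioc (0 : ℝ) 1,
      τ * f p + (x - p) * (y - p) ≤ τ * f y + t * ((y - p) ^ 2 / 2) := by
    rintro t ⟨ht0, ht1⟩
    have hconv : f (p + t * (y - p)) ≤ (1 - t) * f p + t * f y := by
      simpa [smul_eq_mul, show (1 - t) * p + t * y = p + t * (y - p) by ring] using
        hf.2 (mem_univ p) (mem_univ y) (sub_nonneg.2 ht1) ht0.le (by ring)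
    refine le_of_mul_le_mul_left ?_ ht0
    nlinarith [hp (p + t * (y - p)), mul_le_mul_of_nonneg_left hconv hτ.le]
  have hlim : Tendsto (fun t => τ * f y + t * ((y - p) ^ 2 / 2)) (𝓝[>] 0) (𝓝 (τ * f y)) := by
    refine tendsto_nhdsWithin_of_tendsto_nhds ?_
    simpa using (show Continuous fun t => τ * f y + t * ((y - p) ^ 2 / 2) by fun_prop).tendsto 0
  have hmin : τ * f p + (x - p) * (y - p) ≤ τ * f y :=
    ge_of_tendsto hlim (eventually_of_mem (Ioc_mem_nhdsGT one_pos) hsegment)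
  rw [div_mul_eq_mul_div, ← le_sub_iff_add_le', div_le_iff₀ hτ]
  linarith

theorem sub_prox_div_mem_subderiv (hconv : ConvexOn ℝ univ f) (hf : LipschitzWith K f)
    (hτ : 0 < τ) (x : ℝ) : (x - prox τ f x) / τ ∈ subderiv f (prox τ f x) :=
  sub_div_mem_subderiv_of_forall_le hconv hτ (prox_le hf hτ x)

theorem abs_le_of_mem_subderiv (hf : LipschitzWith K f) {g z : ℝ} (hg : g ∈ subderiv f z) :
    |g| ≤ K := by
  have hlip : ∀ a, f a - f z ≤ K * |a - z| := fun a => by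
    have := hf.dist_le_mul a z
    rw [Real.dist_eq, Real.dist_eq] at this
    exact (le_abs_self _).trans this
  have h₁ := hg (z + 1)
  have h₂ := hg (z - 1)
  have l₁ := hlip (z + 1)
  have l₂ := hlip (z - 1)
  simp only [add_sub_cancel_left, sub_sub_cancel_left, abs_neg, abs_one, mul_one, mul_neg]
    at h₁ h₂ l₁ l₂
  rw [abs_le]
  constructor <;> linarith

theorem mul_sub_nonneg_of_mem_subderiv {g h a b : ℝ} (hg : g ∈ subderiv f a)
    (hh : h ∈ subderiv f b) : 0 ≤ (g - h) * (a - b) := by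
  nlinarith [hg b, hh a]

theorem prox_monotone (hconv : ConvexOn ℝ univ f) (hf : LipschitzWith K f) (hτ : 0 < τ) :
    Monotone (prox τ f) := by
  intro x y hxy
  by_contra! hlt
  have h := mul_sub_nonneg_of_mem_subderiv (sub_prox_div_mem_subderiv hconv hf hτ x)
    (sub_prox_div_mem_subderiv hconv hf hτ y)
  rw [div_sub_div_same, div_mul_eq_mul_div, div_nonneg_iff] at h
  rcases h with ⟨h, -⟩ | ⟨-, h⟩ <;> nlinarith

theorem abs_sub_prox_le (hconv : ConvexOn ℝ univ f) (hf : LipschitzWith K f) (hτ : 0 < τ)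
    (x : ℝ) : |x - prox τ f x| ≤ τ * K := by
  have h := abs_le_of_mem_subderiv hf (sub_prox_div_mem_subderiv hconv hf hτ x)
  rwa [abs_div, abs_of_pos hτ, div_le_iff₀' hτ] at h

theorem memLp_sub_prox_comp {X : Type*} [MeasurableSpace X] {μ : Measure X} [IsFiniteMeasure μ]
    (hconv : ConvexOn ℝ univ f) (hf : LipschitzWith K f) (hτ : 0 < τ) (q : ENNReal)
    {w : X → ℝ} (hw : Measurable w) : MemLp (fun x => w x - prox τ f (w x)) q μ :=
  .of_bound (hw.sub ((prox_monotone hconv hf hτ).measurable.comp hw)).aestronglyMeasurable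
    (τ * K) (ae_of_all _ fun x => abs_sub_prox_le hconv hf hτ (w x))

end Prox

theorem integral_mul_le_sqrt_mul_sqrt {X : Type*} [MeasurableSpace X] {μ : Measure X}
    {f g : X → ℝ} (hf : MemLp f 2 μ) (hg : MemLp g 2 μ) :
    ∫ x, f x * g x ∂μ ≤ √(∫ x, f x ^ 2 ∂μ) * √(∫ x, g x ^ 2 ∂μ) := by
  have hinner : ∀ {h k : X → ℝ} (hh : MemLp h 2 μ) (hk : MemLp k 2 μ),
      inner ℝ (hh.toLp h) (hk.toLp k) = ∫ x, h x * k x ∂μ := fun hh hk => by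
    rw [L2.inner_def]
    refine integral_congr_ae ?_
    filter_upwards [hh.coeFn_toLp, hk.coeFn_toLp] with x hx hy
    simp [hx, hy, mul_comm]
  have hnorm : ∀ {h : X → ℝ} (hh : MemLp h 2 μ), ‖hh.toLp h‖ = √(∫ x, h x ^ 2 ∂μ) :=
    fun hh => by
      rw [← Real.sqrt_sq (norm_nonneg _), ← real_inner_self_eq_norm_sq, hinner hh hh]
      simp_rw [sq]
  rw [← hinner hf hg, ← hnorm hf, ← hnorm hg]
  exact real_inner_le_norm _ _

theorem LipschitzWith.integrable_comp_add_sub {X : Type*} [MeasurableSpace X] {μ : Measure X}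
    {f : ℝ → ℝ} {K : NNReal} (hf : LipschitzWith K f) {w z : X → ℝ} (hw : Integrable w μ)
    (hz : AEStronglyMeasurable z μ) : Integrable (fun x => f (w x + z x) - f (z x)) μ := by
  refine (hw.norm.const_mul K).mono' ?_ (ae_of_all _ fun x => ?_)
  · exact (hf.continuous.comp_aestronglyMeasurable (hw.1.add hz)).sub
      (hf.continuous.comp_aestronglyMeasurable hz)
  · simpa [Real.dist_eq] using hf.dist_le_mul (w x + z x) (z x)

theorem KKT.solvesConstrained {ζ : Measure ℝ} {loss : ℝ → ℝ} {δ μ : ℝ} {v : ℝ × ℝ → ℝ}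
    (hμ : 0 ≤ μ) (hv : inH ζ v) (hkkt : KKT ζ loss δ μ v) : SolvesConstrained ζ loss δ v := by
  obtain ⟨⟨h, hG, hL⟩, hslack, hfeas⟩ := hkkt
  refine ⟨hv, hfeas, fun u hu hGu => ?_⟩
  have hLu := hL.2 u hu
  have hGu' := hG.2 u hu
  simp_rw [mul_assoc] at hLu
  rw [integral_const_mul] at hLu
  nlinarith [mul_le_mul_of_nonneg_left hGu' hμ, mul_nonpos_of_nonneg_of_nonpos hμ hGu, hslack]

section GaussianModel

variable (ζ : Measure ℝ) [IsProbabilityMeasure ζ]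

instance isProbabilityMeasure_nu : IsProbabilityMeasure (nu ζ) := by
  unfold nu
  infer_instance

theorem memLp_fst_nu : MemLp (fun p : ℝ × ℝ => p.1) 2 (nu ζ) := by
  have h : (nu ζ).map Prod.fst = gaussianReal 0 1 := by simp [nu]
  exact (memLp_id_gaussianReal 2).comp_measurePreserving ⟨measurable_fst, h⟩

theorem integral_fst_sq_nu : ∫ p : ℝ × ℝ, p.1 ^ 2 ∂(nu ζ) = 1 := by
  rw [nu, integral_fun_fst (fun x : ℝ => x ^ 2)]
  have := variance_id_gaussianReal (μ := 0) (v := 1)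
  rw [variance_eq_integral measurable_id.aemeasurable] at this
  simpa [integral_id_gaussianReal] using this

variable {ζ}

theorem integral_mul_fst_of_system {α δ : ℝ} {e : ℝ × ℝ → ℝ} (he : MemLp e 2 (nu ζ))
    (hδ : δ ≠ 0) (heG : α = δ * ∫ p, e p * p.1 ∂nu ζ) :
    ∫ p, (α * p.1 - e p) * p.1 ∂nu ζ = α * (1 - δ⁻¹) := by
  have hG := memLp_fst_nu ζ
  have ieG : Integrable (fun p => e p * p.1) (nu ζ) := he.integrable_mul hG
  simp_rw [sub_mul, mul_assoc, ← sq]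
  rw [integral_sub (hG.integrable_sq.const_mul α) ieG, integral_const_mul,
    integral_fst_sq_nu, heG]
  field_simp

theorem integral_sq_of_system {α δ : ℝ} {e : ℝ × ℝ → ℝ} (he : MemLp e 2 (nu ζ))
    (hδ : δ ≠ 0) (hee : α ^ 2 = δ * ∫ p, e p ^ 2 ∂nu ζ) (heG : α = δ * ∫ p, e p * p.1 ∂nu ζ) :
    ∫ p, (α * p.1 - e p) ^ 2 ∂nu ζ = α ^ 2 * (1 - δ⁻¹) := by
  have hG := memLp_fst_nu ζ
  have ieG : Integrable (fun p => e p * p.1) (nu ζ) := he.integrable_mul hG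
  have hpt : ∀ p : ℝ × ℝ, (α * p.1 - e p) ^ 2 = α ^ 2 * p.1 ^ 2 - 2 * α * (e p * p.1) + e p ^ 2 :=
    fun p => by ring
  simp_rw [hpt]
  have i1 : Integrable (fun p => α ^ 2 * p.1 ^ 2) (nu ζ) := hG.integrable_sq.const_mul _
  have i2 : Integrable (fun p => 2 * α * (e p * p.1)) (nu ζ) := ieG.const_mul _
  rw [integral_add (f := fun p => α ^ 2 * p.1 ^ 2 - 2 * α * (e p * p.1)) (i1.sub i2)
      he.integrable_sq, integral_sub i1 i2, integral_const_mul, integral_const_mul,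
    integral_fst_sq_nu, (eq_div_iff hδ).2 (hee.trans (mul_comm _ _)).symm,
    (eq_div_iff hδ).2 (heG.trans (mul_comm _ _)).symm]
  field_simp
  ring

theorem hnorm_of_system {α δ : ℝ} {e : ℝ × ℝ → ℝ} (he : MemLp e 2 (nu ζ)) (hα : 0 ≤ α)
    (hδ : 1 ≤ δ) (hee : α ^ 2 = δ * ∫ p, e p ^ 2 ∂nu ζ) (heG : α = δ * ∫ p, e p * p.1 ∂nu ζ) :
    hnorm ζ (fun p => α * p.1 - e p) = α * √(1 - δ⁻¹) := by
  rw [hnorm, integral_sq_of_system he (by positivity) hee heG,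
    Real.sqrt_mul' _ (sub_nonneg.2 (inv_le_one_of_one_le₀ hδ)), Real.sqrt_sq hα]

theorem Gcal_eq_zero_of_system {α δ : ℝ} {e : ℝ × ℝ → ℝ} (he : MemLp e 2 (nu ζ)) (hα : 0 ≤ α)
    (hδ : 1 ≤ δ) (hee : α ^ 2 = δ * ∫ p, e p ^ 2 ∂nu ζ) (heG : α = δ * ∫ p, e p * p.1 ∂nu ζ) :
    Gcal ζ δ (fun p => α * p.1 - e p) = 0 := by
  rw [Gcal, hnorm_of_system he hα hδ hee heG, integral_mul_fst_of_system he (by positivity) heG,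
    mul_div_assoc, Real.div_sqrt, sub_self]

theorem mem_subdiffH_Gcal {δ : ℝ} {v : ℝ × ℝ → ℝ} (hv : inH ζ v) (hv0 : hnorm ζ v ≠ 0) :
    (fun p => v p / hnorm ζ v - p.1 / √(1 - δ⁻¹)) ∈ subdiffH ζ (Gcal ζ δ) v := by
  simp only [subdiffH, Gcal, inH, mem_ofPred_eq] at hv ⊢
  set n := hnorm ζ v
  set s := √(1 - δ⁻¹)
  have hn : 0 < n := lt_of_le_of_ne (Real.sqrt_nonneg _) hv0.symm
  have hG := memLp_fst_nu ζ
  refine ⟨(hv.mul_const n⁻¹).sub (hG.mul_const s⁻¹), fun u hu => ?_⟩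
  have hvv : ∫ p, v p ^ 2 ∂nu ζ = n ^ 2 :=
    (Real.sq_sqrt (integral_nonneg fun _ => sq_nonneg _)).symm
  have ivu : Integrable (fun p => v p * u p) (nu ζ) := hv.integrable_mul hu
  have iuG : Integrable (fun p => u p * p.1) (nu ζ) := hu.integrable_mul hG
  have ivG : Integrable (fun p => v p * p.1) (nu ζ) := hv.integrable_mul hG
  have hlin : ∫ p, (v p / n - p.1 / s) * (u p - v p) ∂nu ζ
      = (∫ p, v p * u p ∂nu ζ) / n - n - (∫ p, u p * p.1 ∂nu ζ) / s
        + (∫ p, v p * p.1 ∂nu ζ) / s := by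
    have hpt : ∀ p : ℝ × ℝ, (v p / n - p.1 / s) * (u p - v p)
        = (v p * u p - v p ^ 2) / n - (u p * p.1 - v p * p.1) / s := fun p => by ring
    have i1 : Integrable (fun p => (v p * u p - v p ^ 2) / n) (nu ζ) :=
      (ivu.sub hv.integrable_sq).div_const n
    have i2 : Integrable (fun p => (u p * p.1 - v p * p.1) / s) (nu ζ) :=
      (iuG.sub ivG).div_const s
    simp_rw [hpt]
    rw [integral_sub i1 i2, integral_div, integral_div, integral_sub ivu hv.integrable_sq,
      integral_sub iuG ivG, hvv]
    field_simp
    ring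
  have hcs : (∫ p, v p * u p ∂nu ζ) / n ≤ hnorm ζ u := by
    rw [div_le_iff₀ hn, mul_comm]
    exact integral_mul_le_sqrt_mul_sqrt hv hu
  rw [hlin]
  linarith

theorem mem_subdiffH_Lcal {loss : ℝ → ℝ} {K : NNReal} (hloss : LipschitzWith K loss)
    {v g : ℝ × ℝ → ℝ} (hv : inH ζ v) (hg : inH ζ g)
    (hsub : ∀ p, g p ∈ subderiv loss (v p + p.2)) : g ∈ subdiffH ζ (Lcal ζ loss) v := by
  refine ⟨hg, fun u (hu : MemLp u 2 (nu ζ)) => ?_⟩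
  have hint : ∀ {w}, MemLp w 2 (nu ζ) →
      Integrable (fun p => loss (w p + p.2) - loss p.2) (nu ζ) :=
    fun hw => hloss.integrable_comp_add_sub (hw.integrable one_le_two)
      measurable_snd.aestronglyMeasurable
  have hgu : Integrable (fun p => g p * (u p - v p)) (nu ζ) := MemLp.integrable_mul hg (hu.sub hv)
  rw [Lcal, Lcal, ← integral_add (hint hv) hgu]
  refine integral_mono ((hint hv).add hgu) (hint hu) fun p => ?_
  have := hsub p (u p + p.2)
  simp only [add_sub_add_right_eq_sub] at this ⊢
  linarith

end GaussianModel

theorem stmt5_general (ζ : Measure ℝ) [IsProbabilityMeasure ζ] (loss : ℝ → ℝ) (δ : ℝ)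
    (hconv : ConvexOn ℝ Set.univ loss) (hlip : LipschitzFun loss)
    (hδ : 1 < δ)
    (α κ : ℝ) (hα : 0 < α) (hκ : 0 < κ) (hsys : solvesSystem ζ loss δ α κ) :
    inH ζ (fun p => prox κ loss (α * p.1 + p.2) - p.2) ∧
    hnorm ζ (fun p => prox κ loss (α * p.1 + p.2) - p.2) = α * Real.sqrt (1 - δ⁻¹) ∧
    0 < α * Real.sqrt (1 - δ⁻¹) ∧
    SolvesConstrained ζ loss δ (fun p => prox κ loss (α * p.1 + p.2) - p.2) ∧
    0 < α * Real.sqrt (1 - δ⁻¹) / κ ∧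
    KKT ζ loss δ (α * Real.sqrt (1 - δ⁻¹) / κ)
      (fun p => prox κ loss (α * p.1 + p.2) - p.2) := by
  obtain ⟨K, hK⟩ := hlip
  set s := √(1 - δ⁻¹)
  have hs : 0 < s := Real.sqrt_pos.2 (sub_pos.2 (inv_lt_one_of_one_lt₀ hδ))
  set e := fun p : ℝ × ℝ => (α * p.1 + p.2) - prox κ loss (α * p.1 + p.2)
  set v := fun p : ℝ × ℝ => prox κ loss (α * p.1 + p.2) - p.2
  have hve : v = fun p => α * p.1 - e p := funext fun p => by simp only [v, e]; ring
  have he : MemLp e 2 (nu ζ) := memLp_sub_prox_comp hconv hK hκ 2 (by fun_prop)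
  have hv : inH ζ v := hve ▸ ((memLp_fst_nu ζ).const_mul α).sub he
  have hnv : hnorm ζ v = α * s := hve ▸ hnorm_of_system he hα.le hδ.le hsys.1 hsys.2
  have hGv : Gcal ζ δ v = 0 := hve ▸ Gcal_eq_zero_of_system he hα.le hδ.le hsys.1 hsys.2
  have hL : (fun p => e p / κ) ∈ subdiffH ζ (Lcal ζ loss) v :=
    mem_subdiffH_Lcal hK hv (he.mul_const κ⁻¹) fun p => by
      simpa [v, e] using sub_prox_div_mem_subderiv hconv hK hκ (α * p.1 + p.2)
  have hkkt : KKT ζ loss δ (α * s / κ) v := by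
    refine ⟨⟨_, mem_subdiffH_Gcal hv (hnv ▸ by positivity), ?_⟩, by rw [hGv, mul_zero], hGv.le⟩
    convert hL using 2 with p
    change -(α * s / κ) * (v p / hnorm ζ v - p.1 / s) = e p / κ
    rw [hnv, hve]
    field_simp
    ring
  exact ⟨hv, hnv, by positivity, hkkt.solvesConstrained (by positivity) hv, by positivity, hkkt⟩

/-- from a positive solution `(α_*, κ_*)` of the nonlinear system,
`v_* = prox[κ_* loss](α_* G + Z) − Z` solves the constrained problem, has norm
`α_*·√(1−δ⁻¹) > 0`, and the KKT condition holds with `μ_* = α_*·√(1−δ⁻¹)/κ_* > 0`. -/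
theorem stmt5 (ζ : Measure ℝ) [IsProbabilityMeasure ζ] (loss : ℝ → ℝ) (δ : ℝ)
    (hconv : ConvexOn ℝ Set.univ loss) (hlip : LipschitzFun loss)
    (hmin : argminIsZero loss) (hδ : 1 < δ) (hZ : 0 < ζ {x : ℝ | x ≠ 0})
    (α κ : ℝ) (hα : 0 < α) (hκ : 0 < κ) (hsys : solvesSystem ζ loss δ α κ) :
    inH ζ (fun p => prox κ loss (α * p.1 + p.2) - p.2) ∧
    hnorm ζ (fun p => prox κ loss (α * p.1 + p.2) - p.2) = α * Real.sqrt (1 - δ⁻¹) ∧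
    0 < α * Real.sqrt (1 - δ⁻¹) ∧
    SolvesConstrained ζ loss δ (fun p => prox κ loss (α * p.1 + p.2) - p.2) ∧
    0 < α * Real.sqrt (1 - δ⁻¹) / κ ∧
    KKT ζ loss δ (α * Real.sqrt (1 - δ⁻¹) / κ)
      (fun p => prox κ loss (α * p.1 + p.2) - p.2) :=
  stmt5_general ζ loss δ hconv hlip hδ α κ hα hκ hsys

end
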